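/- Let $K \geq 2$, $\sigma^2 > 0$, $\nu \in \mathbb{Z}_{>0}$, and let $X_1,\dots,X_K$ be independent random vectors in $\mathbb{R}^d$ with common mean $m$, where $\mathbb{V}[X_k] = \sigma^2/s$ for some integer $s \geq 1$ and $\mathbb{V}[X_i] = \sigma^2/\nu$ for all $i \neq k$. Let $h:\mathbb{R}_{>0}\to\mathbb{R}$ be differentiable, $\widehat m_{-k} = \frac{1}{K-1}\sum_{i\neq k}X_i$, and $R_k = h(\nu) + h'(\nu)\left(\nu\frac{K}{K-1} - \frac{\nu^2}{\sigma^2}\|X_k - \widehat m_{-k}\|^2\right)$. Then the expected utility $u_k = \mathbb{E}[R_k] - h(s)$ equals $h(\nu) + \nu h'(\nu)(1 - \nu/s) - h(s)$. -/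

import Mathlib

/-!
The deviation `X k - m̂₋ₖ` is the weighted sum `∑ i, aᵢ • (X i - m)` of the centred vectors,
with `aₖ = 1` and `aᵢ = -1/(K-1)` otherwise. For independent centred vectors the cross terms
`𝔼⟪X i - m, X j - m⟫ = ⟪𝔼 X i - m, 𝔼 X j - m⟫` vanish, so
`𝔼‖X k - m̂₋ₖ‖² = σ²/s + σ²/((K-1)ν)`, and substituting this into the linear expression `R_k`
leaves `h(ν) + ν h'(ν) (1 - ν/s)`.
-/

open MeasureTheory ProbabilityTheory
open scoped InnerProductSpace

lemma norm_sum_smul_sq_eq_sum_sum_inner {E ι : Type*} [NormedAddCommGroup E]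
    [InnerProductSpace ℝ E] (s : Finset ι) (a : ι → ℝ) (z : ι → E) :
    ‖∑ i ∈ s, a i • z i‖ ^ 2 = ∑ i ∈ s, ∑ j ∈ s, a i * a j * ⟪z i, z j⟫_ℝ := by
  simp_rw [← real_inner_self_eq_norm_sq, sum_inner, inner_sum, real_inner_smul_left,
    real_inner_smul_right, mul_assoc]

lemma inv_card_sub_one_mul_card_sub_one {ι : Type*} [Fintype ι] (hι : 1 < Fintype.card ι) :
    ((Fintype.card ι : ℝ) - 1)⁻¹ * ((Fintype.card ι : ℝ) - 1) = 1 :=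
  inv_mul_cancel₀ (sub_ne_zero.mpr (by exact_mod_cast hι.ne'))

lemma sub_smul_sum_erase_eq_sum_smul_sub {𝕜 E ι : Type*} [Field 𝕜] [AddCommGroup E]
    [Module 𝕜 E] [Fintype ι] [DecidableEq ι] (x : ι → E) (m : E) (k : ι) {c : 𝕜}
    (hc : c * ((Fintype.card ι : 𝕜) - 1) = 1) :
    x k - c • ∑ i ∈ Finset.univ.erase k, x i = ∑ i, (if i = k then 1 else -c) • (x i - m) := by
  have hrest : ∀ i ∈ Finset.univ.erase k, (if i = k then 1 else -c) • (x i - m) = -c • (x i - m) :=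
    fun i hi => by rw [if_neg (Finset.ne_of_mem_erase hi)]
  have hcard : ((Finset.univ.erase k).card : 𝕜) = (Fintype.card ι : 𝕜) - 1 := by
    rw [Finset.card_erase_of_mem (Finset.mem_univ k), Finset.card_univ,
      Nat.cast_sub (Fintype.card_pos_iff.mpr ⟨k⟩), Nat.cast_one]
  rw [← Finset.add_sum_erase _ _ (Finset.mem_univ k), if_pos rfl, one_smul,
    Finset.sum_congr rfl hrest, ← Finset.smul_sum, Finset.sum_sub_distrib, Finset.sum_const,
    ← Nat.cast_smul_eq_nsmul 𝕜, hcard, neg_smul, smul_sub, smul_smul, hc, one_smul]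
  abel

section CentredSum

variable {Ω E ι : Type*} [MeasurableSpace Ω] {μ : Measure Ω}
  [NormedAddCommGroup E] [InnerProductSpace ℝ E] [MeasurableSpace E] [BorelSpace E]
  {X : ι → Ω → E} {m : E}

lemma integrable_inner_sub_of_pairwise_indepFun [IsFiniteMeasure μ]
    (hindep : Pairwise fun i j => IndepFun (X i) (X j) μ) (hint : ∀ i, Integrable (X i) μ)
    (hL2 : ∀ i, Integrable (fun ω => ‖X i ω - m‖ ^ 2) μ) (i j : ι) :
    Integrable (fun ω => ⟪X i ω - m, X j ω - m⟫_ℝ) μ := by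
  obtain rfl | hij := eq_or_ne i j
  · simpa only [real_inner_self_eq_norm_sq] using hL2 i
  · have hsub : Measurable fun x : E => x - m := measurable_id.sub_const m
    exact ((hindep hij).comp hsub hsub).integrable_bilin ((hint i).sub (integrable_const m))
      ((hint j).sub (integrable_const m)) (innerSL ℝ)

lemma integral_inner_sub_eq_zero_of_indepFun [CompleteSpace E] [IsProbabilityMeasure μ]
    {Y Y' : Ω → E} (hindep : IndepFun Y Y' μ) (hY : Integrable Y μ) (hY' : Integrable Y' μ)
    (hmean : ∫ ω, Y ω ∂μ = m) :
    ∫ ω, ⟪Y ω - m, Y' ω - m⟫_ℝ ∂μ = 0 := by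
  have hsub : Measurable fun x : E => x - m := measurable_id.sub_const m
  have hsplit : ∫ ω, ⟪Y ω - m, Y' ω - m⟫_ℝ ∂μ = ⟪∫ ω, Y ω - m ∂μ, ∫ ω, Y' ω - m ∂μ⟫_ℝ :=
    (hindep.comp hsub hsub).integral_bilin (hY.sub (integrable_const m))
      (hY'.sub (integrable_const m)) (innerSL ℝ)
  rw [hsplit, integral_sub hY (integrable_const m), hmean, integral_const, probReal_univ,
    one_smul, sub_self, inner_zero_left]

variable [Fintype ι]

lemma integrable_norm_sum_smul_sub_sq_of_pairwise_indepFun [IsFiniteMeasure μ]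
    (hindep : Pairwise fun i j => IndepFun (X i) (X j) μ)
    (hint : ∀ i, Integrable (X i) μ) (hL2 : ∀ i, Integrable (fun ω => ‖X i ω - m‖ ^ 2) μ)
    (a : ι → ℝ) :
    Integrable (fun ω => ‖∑ i, a i • (X i ω - m)‖ ^ 2) μ := by
  simp_rw [norm_sum_smul_sq_eq_sum_sum_inner]
  exact integrable_finsetSum _ fun i _ => integrable_finsetSum _ fun j _ =>
    (integrable_inner_sub_of_pairwise_indepFun hindep hint hL2 i j).const_mul _

lemma integral_norm_sum_smul_sub_sq_of_pairwise_indepFun [CompleteSpace E]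
    [IsProbabilityMeasure μ] (hindep : Pairwise fun i j => IndepFun (X i) (X j) μ)
    (hint : ∀ i, Integrable (X i) μ) (hL2 : ∀ i, Integrable (fun ω => ‖X i ω - m‖ ^ 2) μ)
    (hmean : ∀ i, ∫ ω, X i ω ∂μ = m) (a : ι → ℝ) :
    ∫ ω, ‖∑ i, a i • (X i ω - m)‖ ^ 2 ∂μ = ∑ i, a i ^ 2 * ∫ ω, ‖X i ω - m‖ ^ 2 ∂μ := by
  have hinner := integrable_inner_sub_of_pairwise_indepFun hindep hint hL2
  simp_rw [norm_sum_smul_sq_eq_sum_sum_inner]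
  rw [integral_finsetSum _ fun i _ => integrable_finsetSum _ fun j _ =>
    (hinner i j).const_mul _]
  refine Finset.sum_congr rfl fun i _ => ?_
  rw [integral_finsetSum _ fun j _ => (hinner i j).const_mul _,
    Finset.sum_eq_single_of_mem i (Finset.mem_univ i)]
  · simp_rw [integral_const_mul, real_inner_self_eq_norm_sq, sq]
  · intro j _ hji
    rw [integral_const_mul, integral_inner_sub_eq_zero_of_indepFun (hindep hji.symm) (hint i)
      (hint j) (hmean i), mul_zero]

variable [DecidableEq ι]

lemma integrable_norm_sub_smul_sum_erase_sq [IsFiniteMeasure μ]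
    (hindep : Pairwise fun i j => IndepFun (X i) (X j) μ) (hint : ∀ i, Integrable (X i) μ)
    (hL2 : ∀ i, Integrable (fun ω => ‖X i ω - m‖ ^ 2) μ) (hι : 1 < Fintype.card ι) (k : ι) :
    Integrable (fun ω => ‖X k ω - ((Fintype.card ι : ℝ) - 1)⁻¹ •
      ∑ i ∈ Finset.univ.erase k, X i ω‖ ^ 2) μ := by
  simp_rw [fun ω => sub_smul_sum_erase_eq_sum_smul_sub (X · ω) m k
    (inv_card_sub_one_mul_card_sub_one hι)]
  exact integrable_norm_sum_smul_sub_sq_of_pairwise_indepFun hindep hint hL2 _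

lemma integral_norm_sub_smul_sum_erase_sq [CompleteSpace E] [IsProbabilityMeasure μ]
    (hindep : Pairwise fun i j => IndepFun (X i) (X j) μ) (hint : ∀ i, Integrable (X i) μ)
    (hL2 : ∀ i, Integrable (fun ω => ‖X i ω - m‖ ^ 2) μ) (hmean : ∀ i, ∫ ω, X i ω ∂μ = m)
    (hι : 1 < Fintype.card ι) (k : ι) :
    ∫ ω, ‖X k ω - ((Fintype.card ι : ℝ) - 1)⁻¹ • ∑ i ∈ Finset.univ.erase k, X i ω‖ ^ 2 ∂μ =
      ∫ ω, ‖X k ω - m‖ ^ 2 ∂μ + ((Fintype.card ι : ℝ) - 1)⁻¹ ^ 2 *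
        ∑ i ∈ Finset.univ.erase k, ∫ ω, ‖X i ω - m‖ ^ 2 ∂μ := by
  simp_rw [fun ω => sub_smul_sum_erase_eq_sum_smul_sub (X · ω) m k
    (inv_card_sub_one_mul_card_sub_one hι)]
  rw [integral_norm_sum_smul_sub_sq_of_pairwise_indepFun hindep hint hL2 hmean,
    ← Finset.add_sum_erase _ _ (Finset.mem_univ k), if_pos rfl, one_pow, one_mul,
    Finset.mul_sum]
  congr 1
  refine Finset.sum_congr rfl fun i hi => ?_
  rw [if_neg (Finset.ne_of_mem_erase hi), neg_sq]

end CentredSum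

theorem deviation_expected_utility_general
    {Ω : Type*} [MeasurableSpace Ω] (μ : Measure Ω) [IsProbabilityMeasure μ]
    {d K : ℕ} (hK : 2 ≤ K)
    (X : Fin K → Ω → EuclideanSpace ℝ (Fin d))
    (m : EuclideanSpace ℝ (Fin d)) (σ2 : ℝ) (hσ2 : 0 < σ2)
    (ν s : ℕ) (hν : 1 ≤ ν) (hs : 1 ≤ s)
    (k : Fin K)
    (hindep : iIndepFun X μ)
    (hint : ∀ i, Integrable (X i) μ)
    (hmean : ∀ i, ∫ ω, X i ω ∂μ = m)
    (hL2 : ∀ i, Integrable (fun ω => ‖X i ω - m‖ ^ 2) μ)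
    (hvark : ∫ ω, ‖X k ω - m‖ ^ 2 ∂μ = σ2 / s)
    (hvar : ∀ i, i ≠ k → ∫ ω, ‖X i ω - m‖ ^ 2 ∂μ = σ2 / ν)
    (h h' : ℝ → ℝ) :
    (∫ ω, (h ν + h' ν * (ν * (K / ((K : ℝ) - 1)) -
        ν ^ 2 / σ2 *
          ‖X k ω - ((K : ℝ) - 1)⁻¹ • ∑ i ∈ Finset.univ.erase k, X i ω‖ ^ 2)) ∂μ)
      - h s
      = h ν + ν * h' ν * (1 - (ν : ℝ) / s) - h s := by
  have hK1 : 1 < Fintype.card (Fin K) := by rw [Fintype.card_fin]; omega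
  have hpair : Pairwise fun i j => IndepFun (X i) (X j) μ := fun i j hij => hindep.indepFun hij
  have hdev := integrable_norm_sub_smul_sum_erase_sq hpair hint hL2 hK1 k
  have hmsd := integral_norm_sub_smul_sum_erase_sq hpair hint hL2 hmean hK1 k
  rw [hvark, Finset.sum_congr rfl fun i hi => hvar i (Finset.ne_of_mem_erase hi),
    Finset.sum_const, Finset.card_erase_of_mem (Finset.mem_univ k), Finset.card_univ,
    nsmul_eq_mul, Nat.cast_sub hK1.le, Nat.cast_one] at hmsd
  simp only [Fintype.card_fin] at hdev hmsd
  have hB := hdev.const_mul ((ν : ℝ) ^ 2 / σ2)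
  have hlin : Integrable (fun ω => (ν : ℝ) * (K / ((K : ℝ) - 1)) - (ν : ℝ) ^ 2 / σ2 *
      ‖X k ω - ((K : ℝ) - 1)⁻¹ • ∑ i ∈ Finset.univ.erase k, X i ω‖ ^ 2) μ :=
    (integrable_const _).sub hB
  rw [integral_add (integrable_const _) (hlin.const_mul _), integral_const_mul,
    integral_sub (integrable_const _) hB, integral_const_mul ((ν : ℝ) ^ 2 / σ2), hmsd]
  simp only [integral_const, probReal_univ, one_smul]
  have hK1' : (K : ℝ) - 1 ≠ 0 := sub_ne_zero.mpr (by exact_mod_cast (by omega : K ≠ 1))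
  have hν0 : (ν : ℝ) ≠ 0 := Nat.cast_ne_zero.mpr (Nat.one_le_iff_ne_zero.mp hν)
  have hs0 : (s : ℝ) ≠ 0 := Nat.cast_ne_zero.mpr (Nat.one_le_iff_ne_zero.mp hs)
  field_simp [hσ2.ne']
  ring

/-- If agent `k` deviates to minibatch size `s` (variance `σ²/s`) while
all other agents use `ν` (variance `σ²/ν`), his expected utility
`u_k = 𝔼[R_k] - h(s)` equals `h(ν) + ν h'(ν)(1 - ν/s) - h(s)`. -/
theorem deviation_expected_utility
    {Ω : Type*} [MeasurableSpace Ω] (μ : Measure Ω) [IsProbabilityMeasure μ]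
    {d K : ℕ} (hK : 2 ≤ K)
    (X : Fin K → Ω → EuclideanSpace ℝ (Fin d))
    (m : EuclideanSpace ℝ (Fin d)) (σ2 : ℝ) (hσ2 : 0 < σ2)
    (ν s : ℕ) (hν : 1 ≤ ν) (hs : 1 ≤ s)
    (k : Fin K)
    (hmeas : ∀ i, Measurable (X i))
    (hindep : iIndepFun X μ)
    (hint : ∀ i, Integrable (X i) μ)
    (hmean : ∀ i, ∫ ω, X i ω ∂μ = m)
    (hL2 : ∀ i, Integrable (fun ω => ‖X i ω - m‖ ^ 2) μ)
    (hvark : ∫ ω, ‖X k ω - m‖ ^ 2 ∂μ = σ2 / s)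
    (hvar : ∀ i, i ≠ k → ∫ ω, ‖X i ω - m‖ ^ 2 ∂μ = σ2 / ν)
    (h h' : ℝ → ℝ) (hd : ∀ t > (0:ℝ), HasDerivAt h (h' t) t) :
    (∫ ω, (h ν + h' ν * (ν * (K / ((K : ℝ) - 1)) -
        ν ^ 2 / σ2 *
          ‖X k ω - ((K : ℝ) - 1)⁻¹ • ∑ i ∈ Finset.univ.erase k, X i ω‖ ^ 2)) ∂μ)
      - h s
      = h ν + ν * h' ν * (1 - (ν : ℝ) / s) - h s :=
  deviation_expected_utility_general μ hK X m σ2 hσ2 ν s hν hs k hindep hint hmean hL2 hvark hvar h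
    h'
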